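/- Fix a finite group L, an integer t ≥ 2 and θ ∈ Aut(L). If (x_1, …, x_t) ∈ L^t and ℓ = x_t·x_{t-1}·⋯·x_2·x_1, then the twisted homogeneous rack C_{(x_1,…,x_t)} equals C_ℓ, i.e. (x_1, …, x_t) and (e, …, e, ℓ) lie in the same twisted conjugacy class of L^t with respect to u. -/

import Mathlib

/-- The automorphism `u` of `L^t`: `u(ℓ₁, …, ℓ_t) = (θ(ℓ_t), ℓ₁, …, ℓ_{t-1})`
(indices `0, …, t-1`, so coordinate `0` is `ℓ₁` and coordinate `t-1` is `ℓ_t`). -/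
def thrU {L : Type*} [Group L] (θ : L ≃* L) (t : ℕ) (x : Fin t → L) : Fin t → L :=
  fun i => if (i : ℕ) = 0 then θ (x ⟨t - 1, by have := i.2; omega⟩)
    else x ⟨(i : ℕ) - 1, by have := i.2; omega⟩

/-- The rack operation `y ▹ z = y · u(z · y⁻¹)` on `L^t`. -/
def thrOp {L : Type*} [Group L] (θ : L ≃* L) (t : ℕ) (y z : Fin t → L) : Fin t → L :=
  y * thrU θ t (z * y⁻¹)

/-- The element `(e, …, e, ℓ)` of `L^t`. -/
def thrBase {L : Type*} [Group L] (t : ℕ) (ℓ : L) : Fin t → L :=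
  fun i => if (i : ℕ) = t - 1 then ℓ else 1

/-- The twisted conjugacy class (twisted homogeneous rack) of `x ∈ L^t`
with respect to `u`, i.e. the orbit of `x` under `g ⇀ x = g · x · u(g)⁻¹`. -/
def thrClassOf {L : Type*} [Group L] (θ : L ≃* L) (t : ℕ) (x : Fin t → L) :
    Set (Fin t → L) :=
  {y | ∃ g : Fin t → L, g * x * (thrU θ t g)⁻¹ = y}

/-- The twisted homogeneous rack `C_ℓ = C_{(e,…,e,ℓ)}` of class `(L, t, θ)`. -/
def thrClass {L : Type*} [Group L] (θ : L ≃* L) (t : ℕ) (ℓ : L) : Set (Fin t → L) :=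
  thrClassOf θ t (thrBase t ℓ)

/-- The twisted conjugacy class `O^{L,θ}_ℓ = {a·ℓ·θ(a)⁻¹ : a ∈ L}`. -/
def twConjClass {L : Type*} [Group L] (θ : L ≃* L) (ℓ : L) : Set L :=
  {k | ∃ a : L, a * ℓ * (θ a)⁻¹ = k}

/-!
With `p_i = x_i ⋯ x_1` the partial products and `b = (e, …, e, ℓ)`, the element `g` with
`g_i = b_i · p_i⁻¹` twists `x` into `b`: for `i > 1` the `i`-th coordinate of `g · x · u(g)⁻¹` is
`b_i · p_i⁻¹ · x_i · p_{i-1} · b_{i-1}⁻¹ = b_i`, since `b_{i-1} = e`, and the first one is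
`b_1 · p_1⁻¹ · x_1 · θ(b_t · p_t⁻¹)⁻¹ = b_1`, since `p_t = ℓ = b_t`.
-/

section TwistedConjugation

variable {L : Type*} [Group L] (θ : L ≃* L) {t : ℕ}

lemma thrU_mul (a b : Fin t → L) : thrU θ t (a * b) = thrU θ t a * thrU θ t b := by
  funext i
  simp only [thrU, Pi.mul_apply]
  split <;> simp

lemma thrU_inv (a : Fin t → L) : thrU θ t a⁻¹ = (thrU θ t a)⁻¹ := by
  funext i
  simp only [thrU, Pi.inv_apply]
  split <;> simp

lemma thrU_apply_zero (a : Fin t → L) (h : 0 < t) :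
    thrU θ t a ⟨0, h⟩ = θ (a ⟨t - 1, by omega⟩) :=
  if_pos rfl

lemma thrU_apply_succ (a : Fin t → L) (i : ℕ) (h : i + 1 < t) :
    thrU θ t a ⟨i + 1, h⟩ = a ⟨i, by omega⟩ :=
  if_neg i.succ_ne_zero

lemma thrClassOf_eq_of_mem {x y : Fin t → L} (h : y ∈ thrClassOf θ t x) :
    thrClassOf θ t y = thrClassOf θ t x := by
  obtain ⟨g, rfl⟩ := h
  ext z
  constructor
  · rintro ⟨k, rfl⟩
    exact ⟨k * g, by rw [thrU_mul]; group⟩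
  · rintro ⟨k, rfl⟩
    exact ⟨k * g⁻¹, by rw [thrU_mul, thrU_inv]; group⟩

end TwistedConjugation

lemma thrBase_apply_of_lt {L : Type*} [Group L] {t : ℕ} (ℓ : L) (i : ℕ) (h : i + 1 < t) :
    thrBase t ℓ ⟨i, by omega⟩ = 1 :=
  if_neg (show i ≠ t - 1 by omega)

lemma thrBase_apply_last {L : Type*} [Group L] {t : ℕ} (ℓ : L) (h : 0 < t) :
    thrBase t ℓ ⟨t - 1, by omega⟩ = ℓ :=
  if_pos rfl

section RevPrefixProd

variable {M : Type*} [Monoid M] {t : ℕ} (x : Fin t → M)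

def revPrefixProd (n : ℕ) : M :=
  ((List.ofFn x).take (n + 1)).reverse.prod

lemma revPrefixProd_zero (h : 0 < t) : revPrefixProd x 0 = x ⟨0, h⟩ := by
  simp [revPrefixProd, List.take_add_one, h]

lemma revPrefixProd_succ (n : ℕ) (h : n + 1 < t) :
    revPrefixProd x (n + 1) = x ⟨n + 1, h⟩ * revPrefixProd x n := by
  have hl : n + 1 < (List.ofFn x).length := by simpa using h
  simp [revPrefixProd, List.take_add_one (i := n + 1), List.getElem?_eq_getElem hl]

lemma revPrefixProd_pred_eq_prod_reverse (h : 0 < t) :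
    revPrefixProd x (t - 1) = (List.ofFn x).reverse.prod := by
  rw [revPrefixProd, Nat.sub_add_cancel h, List.take_of_length_le (by simp)]

end RevPrefixProd

lemma thrBase_prod_mem_thrClassOf {L : Type*} [Group L] (θ : L ≃* L) (t : ℕ) (x : Fin t → L) :
    thrBase t (List.ofFn x).reverse.prod ∈ thrClassOf θ t x := by
  set ℓ := (List.ofFn x).reverse.prod
  refine ⟨fun i => thrBase t ℓ i * (revPrefixProd x i)⁻¹, funext fun ⟨i, hi⟩ => ?_⟩
  simp only [Pi.mul_apply, Pi.inv_apply]
  cases i with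
  | zero =>
    rw [thrU_apply_zero θ _ hi, revPrefixProd_zero x hi,
      revPrefixProd_pred_eq_prod_reverse x hi]
    simp [thrBase_apply_last _ hi, ℓ]
  | succ i =>
    rw [thrU_apply_succ θ _ i hi, revPrefixProd_succ x i hi,
      thrBase_apply_of_lt _ i hi]
    group

theorem thrClassOf_eq_thrClass_prod {L : Type*} [Group L]
    (θ : L ≃* L) (t : ℕ) (x : Fin t → L) :
    thrClassOf θ t x = thrClass θ t (List.ofFn x).reverse.prod :=
  (thrClassOf_eq_of_mem θ (thrBase_prod_mem_thrClassOf θ t x)).symm
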